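/- Let k ≥ 2 be an integer, k = 3m + r with r ∈ {0,1,2}, and p ≥ 2 an integer. For every h ∈ {0,…,m}, the densities Ĩ**_{k,h+1}(u), K̃**_{k,h+1}(u), Ṽ**_{k,h+1}(u) and W̃**_{k,h+1}(u) all belong to Ω_k + Θ_k (i.e., each is equivalent to 0 modulo Ω_k + Θ_k). -/

import Mathlib

open MeasureTheory
open scoped Real BigOperators ENNReal

noncomputable section

/-- `n`-th spatial derivative. -/
def pD (n : ℕ) (f : ℝ → ℂ) : ℝ → ℂ := iteratedDeriv n f

/-- Complex conjugate of the `n`-th spatial derivative. -/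
def cD (n : ℕ) (f : ℝ → ℂ) (x : ℝ) : ℂ := (starRingEnd ℂ) (iteratedDeriv n f x)

/-- Integral over one period of the torus `𝕋 = ℝ/2πℤ`. -/
def tInt (f : ℝ → ℂ) : ℂ := ∫ x in (0:ℝ)..(2 * Real.pi), f x

/-- Squared `L²(𝕋)` norm. -/
def L2sq (f : ℝ → ℂ) : ℝ := ∫ x in (0:ℝ)..(2 * Real.pi), ‖f x‖ ^ 2

/-- Squared `Hᵏ(𝕋)` norm: `‖u‖² = ‖u‖²_{L²} + ‖∂ₓᵏu‖²_{L²}`. -/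
def HkSq (k : ℕ) (f : ℝ → ℂ) : ℝ := L2sq f + L2sq (pD k f)

/-- `Hᵏ(𝕋)` norm. -/
def HkNorm (k : ℕ) (f : ℝ → ℂ) : ℝ := Real.sqrt (HkSq k f)

/-- A classical (smooth and `2π`-periodic in space, differentiable in time) solution of the
defocusing NLS `i ∂ₜ u + ∂ₓ² u - u |u|^{2p} = 0` for times in the set `I`. -/
structure IsNLS (p : ℕ) (I : Set ℝ) (u : ℝ → ℝ → ℂ) : Prop where
  smooth : ∀ t ∈ I, ContDiff ℝ (⊤ : ℕ∞) (u t)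
  periodic : ∀ t ∈ I, Function.Periodic (u t) (2 * Real.pi)
  tdiff : ∀ (x : ℝ), ∀ t ∈ I, DifferentiableAt ℝ (fun s => u s x) t
  eqn : ∀ t ∈ I, ∀ x : ℝ,
    Complex.I * deriv (fun s => u s x) t + pD 2 (u t) x
      = u t x * ((‖u t x‖ : ℂ)) ^ (2 * p)

/-- The nonlinear substitution `g = -i |u|^{2p} u` used in the `**` operation. -/
def nlSub (p : ℕ) (f : ℝ → ℂ) : ℝ → ℂ :=
  fun x => -Complex.I * (f x * (starRingEnd ℂ) (f x)) ^ p * f x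

/-- `Ĩ**_{k,h}`: the time derivative of `Ĩ_{k,h}` with `∂ₜu` replaced by `-i|u|^{2p}u`
and `∂ₜū` replaced by `i|u|^{2p}ū`. -/
def ItildeSS (p k h : ℕ) (f : ℝ → ℂ) : ℝ :=
  (tInt fun x =>
      2 * pD (k - h) (nlSub p f) x * pD (k - h) f x * pD (2 * h - 2) f x
          * (cD 0 f x) ^ (p + 1) * f x ^ (p - 2)
    + (pD (k - h) f x) ^ 2 * pD (2 * h - 2) (nlSub p f) x * (cD 0 f x) ^ (p + 1)
          * f x ^ (p - 2)
    + (pD (k - h) f x) ^ 2 * pD (2 * h - 2) f x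
          * (((p : ℂ) + 1) * (cD 0 f x) ^ p * (starRingEnd ℂ) (nlSub p f x)) * f x ^ (p - 2)
    + (pD (k - h) f x) ^ 2 * pD (2 * h - 2) f x * (cD 0 f x) ^ (p + 1)
          * (((p : ℂ) - 2) * f x ^ (p - 3) * nlSub p f x)).re

/-- `K̃**_{k,h}`. -/
def KtildeSS (p k h : ℕ) (f : ℝ → ℂ) : ℝ :=
  (tInt fun x =>
      2 * pD (k - h) (nlSub p f) x * pD (k - h) f x * cD (2 * h - 2) f x
          * (cD 0 f x) ^ p * f x ^ (p - 1)
    + (pD (k - h) f x) ^ 2 * (starRingEnd ℂ) (pD (2 * h - 2) (nlSub p f) x)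
          * (cD 0 f x) ^ p * f x ^ (p - 1)
    + (pD (k - h) f x) ^ 2 * cD (2 * h - 2) f x
          * ((p : ℂ) * (cD 0 f x) ^ (p - 1) * (starRingEnd ℂ) (nlSub p f x)) * f x ^ (p - 1)
    + (pD (k - h) f x) ^ 2 * cD (2 * h - 2) f x * (cD 0 f x) ^ p
          * (((p : ℂ) - 1) * f x ^ (p - 2) * nlSub p f x)).re

/-- `Ṽ**_{k,h}`. -/
def VtildeSS (p k h : ℕ) (f : ℝ → ℂ) : ℝ :=
  (tInt fun x =>
      pD (k - h) (nlSub p f) x * cD (k - h) f x * pD (2 * h - 2) f x * cD 0 f x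
          * (f x * cD 0 f x) ^ (p - 1)
    + pD (k - h) f x * (starRingEnd ℂ) (pD (k - h) (nlSub p f) x) * pD (2 * h - 2) f x
          * cD 0 f x * (f x * cD 0 f x) ^ (p - 1)
    + pD (k - h) f x * cD (k - h) f x * pD (2 * h - 2) (nlSub p f) x * cD 0 f x
          * (f x * cD 0 f x) ^ (p - 1)
    + pD (k - h) f x * cD (k - h) f x * pD (2 * h - 2) f x * (starRingEnd ℂ) (nlSub p f x)
          * (f x * cD 0 f x) ^ (p - 1)
    + pD (k - h) f x * cD (k - h) f x * pD (2 * h - 2) f x * cD 0 f x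
          * (((p : ℂ) - 1) * (f x * cD 0 f x) ^ (p - 2)
              * (nlSub p f x * cD 0 f x + f x * (starRingEnd ℂ) (nlSub p f x)))).re

/-- `W̃**_{k,h}`. -/
def WtildeSS (p k h : ℕ) (f : ℝ → ℂ) : ℝ :=
  (tInt fun x =>
      pD (k - h) (nlSub p f) x * cD (k - h - 1) f x * pD (2 * h - 1) f x
          * (cD 0 f x) ^ p * f x ^ (p - 1)
    + pD (k - h) f x * (starRingEnd ℂ) (pD (k - h - 1) (nlSub p f) x) * pD (2 * h - 1) f x
          * (cD 0 f x) ^ p * f x ^ (p - 1)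
    + pD (k - h) f x * cD (k - h - 1) f x * pD (2 * h - 1) (nlSub p f) x
          * (cD 0 f x) ^ p * f x ^ (p - 1)
    + pD (k - h) f x * cD (k - h - 1) f x * pD (2 * h - 1) f x
          * ((p : ℂ) * (cD 0 f x) ^ (p - 1) * (starRingEnd ℂ) (nlSub p f x)) * f x ^ (p - 1)
    + pD (k - h) f x * cD (k - h - 1) f x * pD (2 * h - 1) f x * (cD 0 f x) ^ p
          * (((p : ℂ) - 1) * f x ^ (p - 2) * nlSub p f x)).re

/-- The entries of the multi-index are nonincreasing. -/
def antitoneIdx {n : ℕ} (i : Fin n → ℕ) : Prop := ∀ l l' : Fin n, l ≤ l' → i l' ≤ i l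

/-- The functional `𝓙_{(i,j)}(u) = ∫ ∂ₓ^{i₁}u ⋯ ∂ₓ^{iₙ}u ∂ₓ^{j₁}ū ⋯ ∂ₓ^{jₙ}ū`. -/
def Jfun {n : ℕ} (ij : (Fin n → ℕ) × (Fin n → ℕ)) (f : ℝ → ℂ) : ℂ :=
  tInt fun x => (∏ l, pD (ij.1 l) f x) * ∏ l, cD (ij.2 l) f x

/-- The index set `𝓒ᵏ`. -/
def Cset (p k : ℕ) : Set ((Fin (2 * p + 1) → ℕ) × (Fin (2 * p + 1) → ℕ)) :=
  {ij | antitoneIdx ij.1 ∧ antitoneIdx ij.2 ∧ (∑ l, (ij.1 l + ij.2 l)) = 2 * k - 2 ∧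
    ij.1 0 ≤ k - 1 ∧ ij.2 0 ≤ k - 1}

/-- The index set `𝓓ᵏ`. -/
def Dset (p k : ℕ) : Set ((Fin (p + 1) → ℕ) × (Fin (p + 1) → ℕ)) :=
  {ij | antitoneIdx ij.1 ∧ antitoneIdx ij.2 ∧ (∑ l, (ij.1 l + ij.2 l)) = 2 * k ∧
    4 ≤ (∑ l, min (ij.1 l) 1) + ∑ l, min (ij.2 l) 1}

/-- The index set `𝓖ᵏ`. -/
def Gset (p k : ℕ) : Set ((Fin (p + 1) → ℕ) × (Fin (p + 1) → ℕ)) :=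
  {ij | antitoneIdx ij.1 ∧ antitoneIdx ij.2 ∧ (∑ l, (ij.1 l + ij.2 l)) = 2 * k - 2 ∧
    ij.1 0 ≤ k - 1 ∧ ij.2 0 ≤ k - 1}

/-- Smooth `2π`-periodic functions on the line (i.e. smooth functions on the torus). -/
abbrev SPfun := {f : ℝ → ℂ // ContDiff ℝ (⊤ : ℕ∞) f ∧ Function.Periodic f (2 * Real.pi)}

/-- The span `Ω_k + Θ_k` of the functionals `𝓙_{(i,j)}` for `(i,j) ∈ 𝓓ᵏ ∪ 𝓒ᵏ`. -/
def spanJ (p k : ℕ) : Submodule ℂ (SPfun → ℂ) :=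
  Submodule.span ℂ
    (({F | ∃ ij ∈ Dset p k, F = fun f => Jfun ij f.1} ∪
      {F | ∃ ij ∈ Cset p k, F = fun f => Jfun ij f.1} : Set (SPfun → ℂ)))

/-- Equivalence of densities modulo `Ω_k + Θ_k`. -/
def EquivMod (p k : ℕ) (F G : SPfun → ℂ) : Prop := F - G ∈ spanJ p k

section AuxMachinery
open Complex

abbrev Sm (f : ℝ → ℂ) : Prop := ContDiff ℝ (⊤:ℕ∞) f

lemma smPD {f : ℝ → ℂ} (h : Sm f) (n : ℕ) : Sm (pD n f) := by
  rw [pD, iteratedDeriv_eq_iterate]; exact h.iterate_deriv n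

lemma contPD {f : ℝ → ℂ} (h : Sm f) (n : ℕ) : Continuous (pD n f) :=
  (smPD h n).continuous

lemma contCD {f : ℝ → ℂ} (h : Sm f) (n : ℕ) : Continuous (cD n f) :=
  continuous_conj.comp (contPD h n)

lemma hasDerivAtPD {f : ℝ → ℂ} (h : Sm f) (n : ℕ) (x : ℝ) :
    HasDerivAt (pD n f) (pD (n+1) f x) x := by
  have h2 : DifferentiableAt ℝ (pD n f) x :=
    ((smPD h n).differentiable (by simp)).differentiableAt
  simpa [pD, iteratedDeriv_succ] using h2.hasDerivAt

def uProd (I : List ℕ) (f : ℝ → ℂ) (x : ℝ) : ℂ := (I.map fun n => pD n f x).prod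
def Mon (t : List ℕ × List ℕ) (f : ℝ → ℂ) (x : ℝ) : ℂ :=
  uProd t.1 f x * (starRingEnd ℂ) (uProd t.2 f x)

lemma uProd_cont {I f} (h : Sm f) : Continuous (uProd I f) := by
  induction I with
  | nil => exact continuous_const
  | cons a I ih =>
    have : uProd (a :: I) f = fun x => pD a f x * uProd I f x := by
      funext x; simp [uProd]
    rw [this]; exact (contPD h a).mul ih

lemma Mon_cont {t f} (h : Sm f) : Continuous (Mon t f) :=
  (uProd_cont h).mul (continuous_conj.comp (uProd_cont h))

lemma uProd_nil (f x) : uProd [] f x = 1 := rfl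
lemma uProd_cons (n I f x) : uProd (n :: I) f x = pD n f x * uProd I f x := by simp [uProd]

def bumps : List ℕ → List (List ℕ)
  | [] => []
  | n :: I => ((n+1) :: I) :: (bumps I).map (n :: ·)

lemma hasDerivAt_uProd {I f} (h : Sm f) (x : ℝ) :
    HasDerivAt (uProd I f) (((bumps I).map fun I' => uProd I' f x).sum) x := by
  induction I with
  | nil =>
    have : HasDerivAt (uProd ([]:List ℕ) f) 0 x := hasDerivAt_const x (1:ℂ)
    simpa [bumps] using this
  | cons n I ih =>
    have hm : HasDerivAt (fun y => pD n f y * uProd I f y)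
        (pD (n+1) f x * uProd I f x + pD n f x * ((bumps I).map fun I' => uProd I' f x).sum) x :=
      (hasDerivAtPD h n x).mul ih
    have he : (fun y => pD n f y * uProd I f y) = uProd (n :: I) f := by
      funext y; simp [uProd]
    rw [he] at hm
    convert hm using 1
    have aux : ∀ L : List (List ℕ),
        ((L.map (n :: ·)).map (fun I' => uProd I' f x)).sum
          = pD n f x * (L.map fun I' => uProd I' f x).sum := by
      intro L
      induction L with
      | nil => simp
      | cons J L ihL =>
          simp only [List.map_cons, List.sum_cons, List.map_map] at ihL ⊢
          simp [uProd_cons, ihL, mul_add]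
    simp only [bumps, List.map_cons, List.sum_cons, aux, uProd_cons]

lemma bumps_length : ∀ {I I' : List ℕ}, I' ∈ bumps I → I'.length = I.length := by
  intro I
  induction I with
  | nil => intro I' h; simp [bumps] at h
  | cons n I ih =>
    intro I' h
    simp only [bumps, List.mem_cons, List.mem_map] at h
    rcases h with rfl | ⟨J, hJ, rfl⟩
    · simp
    · simp [ih hJ]

lemma bumps_sum : ∀ {I I' : List ℕ}, I' ∈ bumps I → I'.sum = I.sum + 1 := by
  intro I
  induction I with
  | nil => intro I' h; simp [bumps] at h
  | cons n I ih =>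
    intro I' h
    simp only [bumps, List.mem_cons, List.mem_map] at h
    rcases h with rfl | ⟨J, hJ, rfl⟩
    · simp; omega
    · simp [ih hJ]; omega

lemma bumps_le {c : ℕ} : ∀ {I I' : List ℕ}, (∀ m ∈ I, m ≤ c) → I' ∈ bumps I →
    ∀ m ∈ I', m ≤ c + 1 := by
  intro I
  induction I with
  | nil => intro I' _ h; simp [bumps] at h
  | cons n I ih =>
    intro I' hc h
    simp only [bumps, List.mem_cons, List.mem_map] at h
    have hn : n ≤ c := hc n (by simp)
    have hI : ∀ m ∈ I, m ≤ c := fun m hm => hc m (by simp [hm])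
    rcases h with rfl | ⟨J, hJ, rfl⟩
    · intro m hm
      rcases List.mem_cons.mp hm with rfl | hm
      · omega
      · exact le_trans (hI m hm) (by omega)
    · intro m hm
      rcases List.mem_cons.mp hm with rfl | hm
      · omega
      · exact ih hI hJ m hm

def dMon (t : List ℕ × List ℕ) : List (List ℕ × List ℕ) :=
  (bumps t.1).map (fun I' => (I', t.2)) ++ (bumps t.2).map (fun J' => (t.1, J'))

lemma uProd_append (I I' : List ℕ) (f x) :
    uProd (I ++ I') f x = uProd I f x * uProd I' f x := by
  simp [uProd]

lemma hasDerivAt_Mon {t : List ℕ × List ℕ} {f : ℝ → ℂ} (h : Sm f) (x : ℝ) :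
    HasDerivAt (Mon t f) (((dMon t).map fun t' => Mon t' f x).sum) x := by
  obtain ⟨I, J⟩ := t
  have hu := hasDerivAt_uProd (I := I) h x
  have hv := hasDerivAt_uProd (I := J) h x
  have hvc : HasDerivAt (fun y => (starRingEnd ℂ) (uProd J f y))
      ((starRingEnd ℂ) (((bumps J).map fun J' => uProd J' f x).sum)) x := by
    have := hv.star
    simp only [starRingEnd_apply]
    exact this
  have hm := hu.mul hvc
  have he : (uProd I f * fun y => (starRingEnd ℂ) (uProd J f y)) = Mon (I, J) f := rfl
  rw [he] at hm
  convert hm using 1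
  case e'_4 => rfl
  simp only [dMon, List.map_append, List.sum_append, List.map_map]
  congr 1
  · rw [← List.sum_map_mul_right]
    congr 1
  · rw [map_list_sum, List.map_map, ← List.sum_map_mul_left]
    congr 1

lemma hasDerivAt_list_sum {α : Type*} (T : List α) (F : α → ℝ → ℂ) (v : α → ℂ) (x : ℝ)
    (h : ∀ t ∈ T, HasDerivAt (F t) (v t) x) :
    HasDerivAt (fun y => (T.map fun t => F t y).sum) ((T.map v).sum) x := by
  induction T with
  | nil => simpa using hasDerivAt_const x (0:ℂ)
  | cons t T ih =>
    simp only [List.map_cons, List.sum_cons]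
    exact ((h t (by simp)).add (ih fun t' ht' => h t' (by simp [ht']))).congr_deriv rfl

lemma sum_flatMap' {α : Type*} (l : List α) (f : α → List ℂ) :
    (l.flatMap f).sum = (l.map fun a => (f a).sum).sum := by
  induction l with
  | nil => simp
  | cons a l ih => simp [List.flatMap_cons, ih]


def Pm (a b s : ℕ) (t : List ℕ × List ℕ) : Prop :=
  t.1.length = a ∧ t.2.length = b ∧ t.1.sum + t.2.sum = s

def Comb (a b s : ℕ) (G : (ℝ → ℂ) → ℝ → ℂ) : Prop :=
  ∃ T : List (ℂ × List ℕ × List ℕ), (∀ t ∈ T, Pm a b s t.2) ∧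
    ∀ f, Sm f → ∀ x, G f x = (T.map fun t => t.1 * Mon t.2 f x).sum

lemma comb_congr {a b s G H} (hGH : ∀ f, Sm f → ∀ x, G f x = H f x)
    (h : Comb a b s H) : Comb a b s G := by
  obtain ⟨T, hT, hv⟩ := h
  exact ⟨T, hT, fun f hf x => (hGH f hf x).trans (hv f hf x)⟩

lemma comb_zero {a b s} : Comb a b s (fun _ _ => 0) := ⟨[], by simp, by simp⟩

lemma comb_const (z : ℂ) : Comb 0 0 0 (fun _ _ => z) := by
  refine ⟨[(z, [], [])], by simp [Pm], fun f hf x => ?_⟩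
  simp [Mon, uProd]

lemma comb_pD (n : ℕ) : Comb 1 0 n (fun f x => pD n f x) := by
  refine ⟨[(1, [n], [])], by simp [Pm], fun f hf x => ?_⟩
  simp [Mon, uProd]

lemma comb_cD (n : ℕ) : Comb 0 1 n (fun f x => cD n f x) := by
  refine ⟨[(1, [], [n])], by simp [Pm], fun f hf x => ?_⟩
  simp [Mon, uProd, cD, pD]

lemma comb_id : Comb 1 0 0 (fun f x => f x) := by
  refine comb_congr (fun f hf x => ?_) (comb_pD 0)
  simp [pD]

lemma comb_conj {a b s G} (h : Comb a b s G) :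
    Comb b a s (fun f x => (starRingEnd ℂ) (G f x)) := by
  obtain ⟨T, hT, hv⟩ := h
  refine ⟨T.map fun t => ((starRingEnd ℂ) t.1, t.2.2, t.2.1), ?_, fun f hf x => ?_⟩
  · intro t ht
    simp only [List.mem_map] at ht
    obtain ⟨t', ht', rfl⟩ := ht
    obtain ⟨h1, h2, h3⟩ := hT t' ht'
    exact ⟨h2, h1, by dsimp only; omega⟩
  · dsimp only
    rw [hv f hf x, map_list_sum, List.map_map, List.map_map]
    refine congrArg List.sum (List.map_congr_left fun t _ => ?_)
    simp only [Function.comp_apply, map_mul]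
    congr 1
    simp only [Mon, map_mul, RingHom.id_apply, starRingEnd_self_apply, mul_comm]

lemma comb_add {a b s G H} (hG : Comb a b s G) (hH : Comb a b s H) :
    Comb a b s (fun f x => G f x + H f x) := by
  obtain ⟨T, hT, hv⟩ := hG
  obtain ⟨T', hT', hv'⟩ := hH
  refine ⟨T ++ T', ?_, fun f hf x => ?_⟩
  · intro t ht
    rcases List.mem_append.mp ht with ht | ht
    exacts [hT t ht, hT' t ht]
  · dsimp only
    rw [hv f hf x, hv' f hf x, List.map_append, List.sum_append]

lemma Mon_append (t t' : List ℕ × List ℕ) (f x) :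
    Mon (t.1 ++ t'.1, t.2 ++ t'.2) f x = Mon t f x * Mon t' f x := by
  simp only [Mon, uProd_append, map_mul]
  ring

lemma comb_mul {a b s a' b' s' G H} (hG : Comb a b s G) (hH : Comb a' b' s' H) :
    Comb (a+a') (b+b') (s+s') (fun f x => G f x * H f x) := by
  obtain ⟨T, hT, hv⟩ := hG
  obtain ⟨T', hT', hv'⟩ := hH
  refine ⟨T.flatMap fun t => T'.map fun t' => (t.1 * t'.1, t.2.1 ++ t'.2.1, t.2.2 ++ t'.2.2),
    ?_, fun f hf x => ?_⟩
  · intro u hu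
    simp only [List.mem_flatMap, List.mem_map] at hu
    obtain ⟨t, ht, t', ht', rfl⟩ := hu
    obtain ⟨h1, h2, h3⟩ := hT t ht
    obtain ⟨h1', h2', h3'⟩ := hT' t' ht'
    exact ⟨by simp [h1, h1'], by simp [h2, h2'], by simp; omega⟩
  · dsimp only
    rw [hv f hf x, hv' f hf x, List.map_flatMap, sum_flatMap']
    rw [← List.sum_map_mul_right]
    refine congrArg List.sum (List.map_congr_left fun t _ => ?_)
    simp only [List.map_map]
    rw [← List.sum_map_mul_left]
    refine congrArg List.sum (List.map_congr_left fun t' _ => ?_)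
    simp only [Function.comp_apply]
    rw [Mon_append (t.2.1, t.2.2) (t'.2.1, t'.2.2)]
    ring

lemma comb_cast {a b s a' b' s' G} (h : Comb a b s G)
    (ha : a = a') (hb : b = b') (hs : s = s') : Comb a' b' s' G := by
  subst ha hb hs
  exact h

lemma comb_pow {a b s G} (h : Comb a b s G) (n : ℕ) :
    Comb (n*a) (n*b) (n*s) (fun f x => (G f x) ^ n) := by
  induction n with
  | zero =>
    exact comb_congr (fun f hf x => by simp)
      (comb_cast (comb_const 1) (by ring) (by ring) (by ring))
  | succ n ih =>
    have := comb_mul ih h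
    refine comb_congr (fun f hf x => ?_) (comb_cast this (by ring) (by ring) (by ring))
    ring

lemma comb_deriv {a b s G} (h : Comb a b s G) :
    Comb a b (s+1) (fun f x => deriv (G f) x) := by
  obtain ⟨T, hT, hv⟩ := h
  refine ⟨T.flatMap fun t => (dMon t.2).map fun t' => (t.1, t'), ?_, fun f hf x => ?_⟩
  · intro u hu
    simp only [List.mem_flatMap, List.mem_map] at hu
    obtain ⟨t, ht, t', ht', rfl⟩ := hu
    obtain ⟨h1, h2, h3⟩ := hT t ht
    rcases List.mem_append.mp ht' with hm | hm
    · simp only [List.mem_map] at hm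
      obtain ⟨I', hI', rfl⟩ := hm
      exact ⟨(bumps_length hI').trans h1, h2, by have := bumps_sum hI'; simp; omega⟩
    · simp only [List.mem_map] at hm
      obtain ⟨J', hJ', rfl⟩ := hm
      exact ⟨h1, (bumps_length hJ').trans h2, by have := bumps_sum hJ'; simp; omega⟩
  · dsimp only
    have hfun : G f = fun y => (T.map fun t => t.1 * Mon t.2 f y).sum := by
      funext y; exact hv f hf y
    rw [hfun]
    have hd : HasDerivAt (fun y => (T.map fun t => t.1 * Mon t.2 f y).sum)
        ((T.map fun t => t.1 * ((dMon t.2).map fun t' => Mon t' f x).sum).sum) x := by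
      refine hasDerivAt_list_sum T (fun t y => t.1 * Mon t.2 f y) _ x fun t ht => ?_
      exact (hasDerivAt_Mon hf x).const_mul t.1
    rw [hd.deriv]
    rw [List.map_flatMap, sum_flatMap']
    refine congrArg List.sum (List.map_congr_left fun t _ => ?_)
    rw [List.map_map, ← List.sum_map_mul_left]
    refine congrArg List.sum (List.map_congr_left fun t' _ => rfl)

lemma comb_iter_pD {a b s G} (h : Comb a b s G) (n : ℕ) :
    Comb a b (s+n) (fun f x => pD n (G f) x) := by
  induction n with
  | zero => exact comb_congr (fun f hf x => by simp [pD]) h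
  | succ n ih =>
    have := comb_deriv ih
    refine comb_congr (fun f hf x => ?_) (comb_cast this rfl rfl (by omega))
    simp only [pD, iteratedDeriv_succ]

-- Periodicity
lemma periodic_deriv {c : ℝ} {f : ℝ → ℂ} (hf : Function.Periodic f c) :
    Function.Periodic (deriv f) c := by
  intro x
  have h1 : (fun y => f (y + c)) = f := funext hf
  rw [← deriv_comp_add_const, h1]

lemma periodic_pD {c : ℝ} {f : ℝ → ℂ} (hf : Function.Periodic f c) (n : ℕ) :
    Function.Periodic (pD n f) c := by
  induction n with
  | zero => exact hf
  | succ n ih =>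
    have : pD (n+1) f = deriv (pD n f) := by simp [pD, iteratedDeriv_succ]
    rw [this]; exact periodic_deriv ih

lemma periodic_uProd {c : ℝ} {I : List ℕ} {f : ℝ → ℂ} (hf : Function.Periodic f c) :
    Function.Periodic (uProd I f) c := by
  induction I with
  | nil => intro x; rfl
  | cons n I ih =>
    intro x
    simp only [uProd_cons]
    rw [periodic_pD hf n x, ih x]

lemma periodic_Mon {c : ℝ} {t : List ℕ × List ℕ} {f : ℝ → ℂ} (hf : Function.Periodic f c) :
    Function.Periodic (Mon t f) c := by
  intro x
  simp only [Mon]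
  rw [periodic_uProd hf x, periodic_uProd hf x]

-- tInt lemmas
lemma tInt_congr {f g : ℝ → ℂ} (h : ∀ x, f x = g x) : tInt f = tInt g := by
  unfold tInt
  exact intervalIntegral.integral_congr fun x _ => h x

lemma tInt_add {f g : ℝ → ℂ} (hf : Continuous f) (hg : Continuous g) :
    tInt (fun x => f x + g x) = tInt f + tInt g :=
  intervalIntegral.integral_add (hf.intervalIntegrable _ _) (hg.intervalIntegrable _ _)

lemma tInt_const_mul (z : ℂ) (f : ℝ → ℂ) : tInt (fun x => z * f x) = z * tInt f :=
  intervalIntegral.integral_const_mul z f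

lemma cont_listsum {α : Type*} (T : List α) (e : α → ℝ → ℂ) (h : ∀ t ∈ T, Continuous (e t)) :
    Continuous (fun x => (T.map fun t => e t x).sum) := by
  induction T with
  | nil => simpa using continuous_const
  | cons t T ih =>
    simp only [List.map_cons, List.sum_cons]
    exact (h t (by simp)).add (ih fun t' ht' => h t' (by simp [ht']))

lemma tInt_listsum {α : Type*} (T : List α) (e : α → ℝ → ℂ) (h : ∀ t ∈ T, Continuous (e t)) :
    tInt (fun x => (T.map fun t => e t x).sum) = (T.map fun t => tInt (e t)).sum := by
  induction T with
  | nil => simp [tInt]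
  | cons t T ih =>
    simp only [List.map_cons, List.sum_cons]
    rw [tInt_add (h t (by simp)) (cont_listsum T e fun t' ht' => h t' (by simp [ht'])),
      ih fun t' ht' => h t' (by simp [ht'])]

lemma tInt_conj (f : ℝ → ℂ) : tInt (fun x => (starRingEnd ℂ) (f x)) = (starRingEnd ℂ) (tInt f) := by
  unfold tInt
  rw [intervalIntegral, intervalIntegral, map_sub, ← integral_conj, ← integral_conj]

/-- Integration by parts on the torus, with vanishing boundary term. -/
lemma tInt_IBP {g w g' w' : ℝ → ℂ}
    (hg : ∀ x, HasDerivAt g (g' x) x) (hw : ∀ x, HasDerivAt w (w' x) x)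
    (hg' : Continuous g') (hw' : Continuous w')
    (hper : Function.Periodic (fun x => g x * w x) (2 * Real.pi)) :
    tInt (fun x => g' x * w x) = - tInt (fun x => g x * w' x) := by
  have hgc : Continuous g := by
    have : Differentiable ℝ g := fun x => (hg x).differentiableAt
    exact this.continuous
  have hwc : Continuous w := by
    have : Differentiable ℝ w := fun x => (hw x).differentiableAt
    exact this.continuous
  have htot : tInt (fun x => g' x * w x + g x * w' x)
      = (g (2*Real.pi) * w (2*Real.pi)) - (g 0 * w 0) := by
    unfold tInt
    refine intervalIntegral.integral_eq_sub_of_hasDerivAt (fun x _ => ((hg x).mul (hw x))) ?_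
    exact ((hg'.mul hwc).add (hgc.mul hw')).intervalIntegrable _ _
  have hz : g (2*Real.pi) * w (2*Real.pi) - g 0 * w 0 = 0 := by
    have := hper 0
    simp only [zero_add] at this
    rw [this, sub_self]
  rw [hz] at htot
  rw [tInt_add (f := fun x => g' x * w x) (g := fun x => g x * w' x) (hg'.mul hwc) (hgc.mul hw')] at htot
  exact eq_neg_of_add_eq_zero_left htot

lemma hasDerivAtCD {f : ℝ → ℂ} (h : Sm f) (n : ℕ) (x : ℝ) :
    HasDerivAt (cD n f) (cD (n+1) f x) x := by
  have h2 := (hasDerivAtPD h n x).star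
  show HasDerivAt (fun y => (starRingEnd ℂ) (pD n f y)) ((starRingEnd ℂ) (pD (n+1) f x)) x
  simp only [starRingEnd_apply]
  exact h2

lemma periodic_cD {c : ℝ} {f : ℝ → ℂ} (hf : Function.Periodic f c) (n : ℕ) :
    Function.Periodic (cD n f) c := by
  intro x
  show (starRingEnd ℂ) (pD n f (x + c)) = (starRingEnd ℂ) (pD n f x)
  rw [periodic_pD hf n x]

lemma smOf (f : SPfun) : Sm f.1 := f.2.1.of_le (by simp)

lemma perOf (f : SPfun) : Function.Periodic f.1 (2 * Real.pi) := f.2.2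

lemma exists_sorted (n : ℕ) (I : List ℕ) (hlen : I.length = n) :
    ∃ g : Fin n → ℕ, antitoneIdx g ∧ (∀ l, g l ∈ I) ∧
      (∀ A : ℕ → ℂ, (∏ l, A (g l)) = (I.map A).prod) ∧ (∑ l, g l) = I.sum := by
  set L := I.insertionSort (· ≥ ·) with hL
  have hperm : List.Perm L I := List.perm_insertionSort (· ≥ ·) I
  have hsort : List.Pairwise (· ≥ ·) L := List.pairwise_insertionSort (· ≥ ·) I
  have hlenL : L.length = n := hperm.length_eq.trans hlen
  refine ⟨fun l => L.get (Fin.cast hlenL.symm l), ?_, ?_, ?_, ?_⟩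
  · intro l l' hll'
    exact hsort.rel_get_of_le (show Fin.cast hlenL.symm l ≤ Fin.cast hlenL.symm l' from hll')
  · intro l
    exact hperm.subset (L.get_mem _)
  · intro A
    have h1 : (I.map A).prod = (L.map A).prod := ((hperm.map A).prod_eq).symm
    have h2 : (L.map A).prod = ∏ j : Fin L.length, A (L.get j) := by
      conv_lhs => rw [← List.ofFn_get L]
      rw [List.map_ofFn, List.prod_ofFn]
      rfl
    rw [h1, h2]
    exact (Equiv.prod_comp (finCongr hlenL) (fun l : Fin n => A (L.get (Fin.cast hlenL.symm l)))).symm.trans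
      (Finset.prod_congr rfl (fun j _ => rfl))
  · have h1 : I.sum = L.sum := (hperm.sum_eq).symm
    have h2 : L.sum = ∑ j : Fin L.length, L.get j := by
      conv_lhs => rw [← List.ofFn_get L]
      rw [List.sum_ofFn]
    rw [h1, h2]
    exact (Equiv.sum_comp (finCongr hlenL) (fun l : Fin n => L.get (Fin.cast hlenL.symm l))).symm.trans
      (Finset.sum_congr rfl (fun j _ => rfl))

lemma mem_span_listsum {α : Type*} (S : Submodule ℂ (SPfun → ℂ)) (T : List α)
    (gfun : α → SPfun → ℂ) (h : ∀ t ∈ T, gfun t ∈ S) :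
    (fun f => (T.map fun t => gfun t f).sum) ∈ S := by
  induction T with
  | nil => exact S.zero_mem
  | cons t T ih =>
    have : (fun f => ((t :: T).map fun t' => gfun t' f).sum)
        = gfun t + fun f => (T.map fun t' => gfun t' f).sum := by
      funext f; simp
    rw [this]
    exact S.add_mem (h t (by simp)) (ih fun t' ht' => h t' (by simp [ht']))

lemma mem_le_listsum {m : ℕ} : ∀ {l : List ℕ}, m ∈ l → m ≤ l.sum := by
  intro l
  induction l with
  | nil => intro h; simp at h
  | cons a l ih =>
    intro h
    rcases List.mem_cons.mp h with rfl | h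
    · simp
    · have := ih h; simp; omega

lemma neg_listsum {α : Type*} (T : List α) (e : α → ℂ) :
    -((T.map e).sum) = (T.map fun t => -(e t)).sum := by
  induction T with
  | nil => simp
  | cons t T ih => simp [ih]; ring

lemma uProd_perm {I I' : List ℕ} (h : List.Perm I I') (f x) : uProd I f x = uProd I' f x :=
  (h.map _).prod_eq

lemma Mon_cons_left (M : ℕ) (I' J : List ℕ) (f x) :
    Mon (M::I', J) f x = pD M f x * Mon (I', J) f x := by
  simp only [Mon, uProd_cons, mul_assoc]

lemma Mon_cons_right (M : ℕ) (I J' : List ℕ) (f x) :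
    Mon (I, M::J') f x = cD M f x * Mon (I, J') f x := by
  have : cD M f x = (starRingEnd ℂ) (pD M f x) := rfl
  simp only [Mon, uProd_cons, map_mul, this]
  ring

lemma cprod (J : List ℕ) (f x) :
    (J.map fun n => cD n f x).prod = (starRingEnd ℂ) (uProd J f x) := by
  induction J with
  | nil => simp [uProd]
  | cons n J ih =>
    simp only [List.map_cons, List.prod_cons, uProd_cons, map_mul, ih]
    rfl

lemma mon_base (p k : ℕ) (t : List ℕ × List ℕ)
    (h1 : t.1.length = 2*p+1) (h2 : t.2.length = 2*p+1)
    (h3 : t.1.sum + t.2.sum = 2*k-2)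
    (h4 : ∀ m ∈ t.1, m ≤ k-1) (h5 : ∀ m ∈ t.2, m ≤ k-1) :
    (fun f : SPfun => tInt (Mon t f.1)) ∈ spanJ p k := by
  obtain ⟨g1, ha1, hm1, hp1, hs1⟩ := exists_sorted (2*p+1) t.1 h1
  obtain ⟨g2, ha2, hm2, hp2, hs2⟩ := exists_sorted (2*p+1) t.2 h2
  have hC : (g1, g2) ∈ Cset p k := by
    refine ⟨ha1, ha2, ?_, h4 _ (hm1 0), h5 _ (hm2 0)⟩
    rw [Finset.sum_add_distrib]
    show (∑ l, g1 l) + (∑ l, g2 l) = 2*k-2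
    rw [hs1, hs2]; exact h3
  have heq : (fun f : SPfun => tInt (Mon t f.1)) = fun f => Jfun (g1, g2) f.1 := by
    funext f
    refine (tInt_congr fun x => ?_ : tInt _ = tInt _)
    show Mon t f.1 x = (∏ l, pD (g1 l) f.1 x) * ∏ l, cD (g2 l) f.1 x
    rw [hp1 (fun n => pD n f.1 x), hp2 (fun n => cD n f.1 x), cprod]
    rfl
  rw [heq]
  exact Submodule.subset_span (Or.inr ⟨(g1,g2), hC, rfl⟩)

lemma mon_mem (p k : ℕ) (hk : 1 ≤ k) : ∀ (d : ℕ) (t : List ℕ × List ℕ),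
    t.1.length = 2*p+1 → t.2.length = 2*p+1 → t.1.sum + t.2.sum = 2*k-2 →
    (∀ m ∈ t.1, m ≤ k-1+d) → (∀ m ∈ t.2, m ≤ k-1+d) →
    (fun f : SPfun => tInt (Mon t f.1)) ∈ spanJ p k := by
  intro d
  induction d with
  | zero =>
    intro t h1 h2 h3 h4 h5
    exact mon_base p k t h1 h2 h3 h4 h5
  | succ d ih =>
    intro t h1 h2 h3 h4 h5
    by_cases hA : ∀ m ∈ t.1, m ≤ k-1+d
    · by_cases hB : ∀ m ∈ t.2, m ≤ k-1+d
      · exact ih t h1 h2 h3 hA hB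
      · -- bad entry on the conjugate side
        push_neg at hB
        obtain ⟨M, hMmem, hMgt⟩ := hB
        have hMle : M ≤ k+d := by have := h5 M hMmem; omega
        have hMk : k ≤ M := by omega
        set J' := t.2.erase M with hJ'
        have hpermJ : List.Perm t.2 (M :: J') := List.perm_cons_erase hMmem
        have hlenJ' : J'.length = 2*p := by
          have := List.length_erase_of_mem hMmem
          rw [hJ', this, h2]
          omega
        have hsumJ : M + J'.sum = t.2.sum := by
          have := hpermJ.sum_eq; simp only [List.sum_cons] at this; omega
        have hothersJ : ∀ m ∈ J', m ≤ 2*k-2-M := fun m hm => by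
          have := mem_le_listsum hm; omega
        have hothersI : ∀ m ∈ t.1, m ≤ 2*k-2-M := fun m hm => by
          have := mem_le_listsum hm; omega
        set T' := dMon (t.1, J') with hT'
        have hfe : (fun f : SPfun => tInt (Mon t f.1))
            = fun f => (T'.map fun t' => -(tInt (Mon ((t'.1, (M-1) :: t'.2)) f.1))).sum := by
          funext f
          have hs := smOf f; have hper := perOf f
          have e1 : tInt (Mon t f.1) = tInt (fun x => cD M f.1 x * Mon (t.1, J') f.1 x) := by
            refine tInt_congr fun x => ?_
            rw [show Mon t f.1 x = Mon (t.1, M::J') f.1 x by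
              simp only [Mon]; rw [uProd_perm hpermJ]]
            exact Mon_cons_right M t.1 J' f.1 x
          have hgd : ∀ x, HasDerivAt (cD (M-1) f.1) (cD M f.1 x) x := fun x => by
            have := hasDerivAtCD hs (M-1) x
            rwa [show M - 1 + 1 = M from by omega] at this
          have hwd : ∀ x, HasDerivAt (Mon (t.1, J') f.1)
              ((T'.map fun t' => Mon t' f.1 x).sum) x := fun x => hasDerivAt_Mon hs x
          have e2 : tInt (fun x => cD M f.1 x * Mon (t.1, J') f.1 x)
              = - tInt (fun x => cD (M-1) f.1 x * (T'.map fun t' => Mon t' f.1 x).sum) :=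
            tInt_IBP hgd hwd (contCD hs M)
              (cont_listsum T' _ fun t' _ => Mon_cont hs)
              ((periodic_cD hper (M-1)).mul (periodic_Mon hper))
          have e3 : tInt (fun x => cD (M-1) f.1 x * (T'.map fun t' => Mon t' f.1 x).sum)
              = (T'.map fun t' => tInt (Mon (t'.1, (M-1) :: t'.2) f.1)).sum := by
            have hpt : ∀ x, cD (M-1) f.1 x * (T'.map fun t' => Mon t' f.1 x).sum
                = (T'.map fun t' => Mon (t'.1, (M-1) :: t'.2) f.1 x).sum := fun x => by
              rw [← List.sum_map_mul_left]
              refine congrArg List.sum (List.map_congr_left fun t' _ => ?_)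
              rw [Mon_cons_right]
            rw [tInt_congr hpt, tInt_listsum T' _ (fun t' _ => Mon_cont hs)]
          rw [e1, e2, e3, neg_listsum]
        rw [hfe]
        refine mem_span_listsum (spanJ p k) T' _ fun t' ht' => ?_
        refine Submodule.neg_mem _ ?_
        rcases List.mem_append.mp ht' with hm | hm
        · simp only [List.mem_map] at hm
          obtain ⟨I'', hI'', rfl⟩ := hm
          refine ih (I'', (M-1) :: J') ((bumps_length hI'').trans h1) (by simp [hlenJ']) ?_ ?_ ?_
          · have := bumps_sum hI''; simp only [List.sum_cons]; omega
          · intro m hm'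
            have := bumps_le hothersI hI'' m hm'; omega
          · intro m hm'
            rcases List.mem_cons.mp hm' with rfl | hm'
            · omega
            · have := hothersJ m hm'; omega
        · simp only [List.mem_map] at hm
          obtain ⟨J'', hJ'', rfl⟩ := hm
          refine ih (t.1, (M-1) :: J'') h1 (by simp [(bumps_length hJ'').trans hlenJ']) ?_ ?_ ?_
          · have := bumps_sum hJ''; simp only [List.sum_cons]; omega
          · intro m hm'
            have := hothersI m hm'; omega
          · intro m hm'
            rcases List.mem_cons.mp hm' with rfl | hm'
            · omega
            · have := bumps_le hothersJ hJ'' m hm'; omega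
    · -- bad entry on the u side
      push_neg at hA
      obtain ⟨M, hMmem, hMgt⟩ := hA
      have hMle : M ≤ k+d := by have := h4 M hMmem; omega
      have hMk : k ≤ M := by omega
      set I' := t.1.erase M with hI'
      have hpermI : List.Perm t.1 (M :: I') := List.perm_cons_erase hMmem
      have hlenI' : I'.length = 2*p := by
        have := List.length_erase_of_mem hMmem
        rw [hI', this, h1]
        omega
      have hsumI : M + I'.sum = t.1.sum := by
        have := hpermI.sum_eq; simp only [List.sum_cons] at this; omega
      have hothersI : ∀ m ∈ I', m ≤ 2*k-2-M := fun m hm => by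
        have := mem_le_listsum hm; omega
      have hothersJ : ∀ m ∈ t.2, m ≤ 2*k-2-M := fun m hm => by
        have := mem_le_listsum hm; omega
      set T' := dMon (I', t.2) with hT'
      have hfe : (fun f : SPfun => tInt (Mon t f.1))
          = fun f => (T'.map fun t' => -(tInt (Mon (((M-1) :: t'.1, t'.2)) f.1))).sum := by
        funext f
        have hs := smOf f; have hper := perOf f
        have e1 : tInt (Mon t f.1) = tInt (fun x => pD M f.1 x * Mon (I', t.2) f.1 x) := by
          refine tInt_congr fun x => ?_
          rw [show Mon t f.1 x = Mon (M::I', t.2) f.1 x by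
            simp only [Mon]; rw [uProd_perm hpermI]]
          exact Mon_cons_left M I' t.2 f.1 x
        have hgd : ∀ x, HasDerivAt (pD (M-1) f.1) (pD M f.1 x) x := fun x => by
          have := hasDerivAtPD hs (M-1) x
          rwa [show M - 1 + 1 = M from by omega] at this
        have hwd : ∀ x, HasDerivAt (Mon (I', t.2) f.1)
            ((T'.map fun t' => Mon t' f.1 x).sum) x := fun x => hasDerivAt_Mon hs x
        have e2 : tInt (fun x => pD M f.1 x * Mon (I', t.2) f.1 x)
            = - tInt (fun x => pD (M-1) f.1 x * (T'.map fun t' => Mon t' f.1 x).sum) :=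
          tInt_IBP hgd hwd (contPD hs M)
            (cont_listsum T' _ fun t' _ => Mon_cont hs)
            ((periodic_pD hper (M-1)).mul (periodic_Mon hper))
        have e3 : tInt (fun x => pD (M-1) f.1 x * (T'.map fun t' => Mon t' f.1 x).sum)
            = (T'.map fun t' => tInt (Mon ((M-1) :: t'.1, t'.2) f.1)).sum := by
          have hpt : ∀ x, pD (M-1) f.1 x * (T'.map fun t' => Mon t' f.1 x).sum
              = (T'.map fun t' => Mon ((M-1) :: t'.1, t'.2) f.1 x).sum := fun x => by
            rw [← List.sum_map_mul_left]
            refine congrArg List.sum (List.map_congr_left fun t' _ => ?_)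
            rw [Mon_cons_left]
          rw [tInt_congr hpt, tInt_listsum T' _ (fun t' _ => Mon_cont hs)]
        rw [e1, e2, e3, neg_listsum]
      rw [hfe]
      refine mem_span_listsum (spanJ p k) T' _ fun t' ht' => ?_
      refine Submodule.neg_mem _ ?_
      rcases List.mem_append.mp ht' with hm | hm
      · simp only [List.mem_map] at hm
        obtain ⟨I'', hI'', rfl⟩ := hm
        refine ih ((M-1) :: I'', t.2) (by simp [(bumps_length hI'').trans hlenI']) h2 ?_ ?_ ?_
        · have := bumps_sum hI''; simp only [List.sum_cons]; omega
        · intro m hm'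
          rcases List.mem_cons.mp hm' with rfl | hm'
          · omega
          · have := bumps_le hothersI hI'' m hm'; omega
        · intro m hm'
          have := hothersJ m hm'; omega
      · simp only [List.mem_map] at hm
        obtain ⟨J'', hJ'', rfl⟩ := hm
        refine ih ((M-1) :: I', J'') (by simp [hlenI']) ((bumps_length hJ'').trans h2) ?_ ?_ ?_
        · have := bumps_sum hJ''; simp only [List.sum_cons]; omega
        · intro m hm'
          rcases List.mem_cons.mp hm' with rfl | hm'
          · omega
          · have := hothersI m hm'; omega
        · intro m hm'
          have := bumps_le hothersJ hJ'' m hm'; omega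

lemma mem_span_of_comb (p k : ℕ) (hk : 1 ≤ k) {G}
    (h : Comb (2*p+1) (2*p+1) (2*k-2) G) :
    (fun f : SPfun => tInt (G f.1)) ∈ spanJ p k := by
  obtain ⟨T, hT, hv⟩ := h
  have key : (fun f : SPfun => tInt (G f.1))
      = fun f => (T.map fun t => t.1 * tInt (Mon t.2 f.1)).sum := by
    funext f
    have hs := smOf f
    rw [tInt_congr (hv f.1 hs)]
    rw [tInt_listsum T (fun t x => t.1 * Mon t.2 f.1 x) (fun t _ => continuous_const.mul (Mon_cont hs))]
    refine congrArg List.sum (List.map_congr_left fun t _ => ?_)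
    exact tInt_const_mul t.1 _
  rw [key]
  refine mem_span_listsum _ T (fun t f => t.1 * tInt (Mon t.2 f.1)) fun t ht => ?_
  obtain ⟨h1, h2, h3⟩ := hT t ht
  have hb1 : ∀ m ∈ t.2.1, m ≤ k - 1 + 2*k := fun m hm => by
    have := mem_le_listsum hm; omega
  have hb2 : ∀ m ∈ t.2.2, m ≤ k - 1 + 2*k := fun m hm => by
    have := mem_le_listsum hm; omega
  have base := mon_mem p k hk (2*k) t.2 h1 h2 h3 hb1 hb2
  have heq : (fun f : SPfun => t.1 * tInt (Mon t.2 f.1))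
      = t.1 • (fun f : SPfun => tInt (Mon t.2 f.1)) := rfl
  show (fun f : SPfun => t.1 * tInt (Mon t.2 f.1)) ∈ spanJ p k
  rw [heq]
  exact Submodule.smul_mem _ _ base

lemma re_mem_span (p k : ℕ) (hk : 1 ≤ k) {G}
    (h : Comb (2*p+1) (2*p+1) (2*k-2) G) :
    (fun f : SPfun => (Complex.ofReal ((tInt (G f.1)).re) : ℂ)) ∈ spanJ p k := by
  have h2 := comb_conj h
  have m1 := mem_span_of_comb p k hk h
  have m2 := mem_span_of_comb p k hk h2
  have key : (fun f : SPfun => (Complex.ofReal ((tInt (G f.1)).re) : ℂ))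
      = (2⁻¹ : ℂ) • ((fun f : SPfun => tInt (G f.1))
          + fun f : SPfun => tInt (fun x => (starRingEnd ℂ) (G f.1 x))) := by
    funext f
    have hc : tInt (fun x => (starRingEnd ℂ) (G f.1 x)) = (starRingEnd ℂ) (tInt (G f.1)) :=
      tInt_conj _
    simp only [Pi.smul_apply, Pi.add_apply, hc, smul_eq_mul]
    rw [Complex.add_conj]
    push_cast
    ring
  rw [key]
  exact Submodule.smul_mem _ _ (Submodule.add_mem _ m1 m2)

end AuxMachinery

/-- Equation (3.10): the `**` parts of the correction densities belong to `Ω_k + Θ_k`. -/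
theorem starstar_in_span
    (p m r k : ℕ) (hp : 2 ≤ p) (hr : r < 3) (hkr : k = 3 * m + r) (hk : 2 ≤ k)
    (h : ℕ) (hh : h ≤ m) :
    EquivMod p k (fun f => Complex.ofReal (ItildeSS p k (h + 1) f.1)) 0 ∧
    EquivMod p k (fun f => Complex.ofReal (KtildeSS p k (h + 1) f.1)) 0 ∧
    EquivMod p k (fun f => Complex.ofReal (VtildeSS p k (h + 1) f.1)) 0 ∧
    EquivMod p k (fun f => Complex.ofReal (WtildeSS p k (h + 1) f.1)) 0 := by
  have hc2 : h + 2 ≤ k := by omega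
  have h1k : 1 ≤ k := by omega
  have cnl : Comb (p+1) p 0 (fun f x => nlSub p f x) :=
    comb_congr (fun f hf x => rfl) (comb_cast
      (comb_mul (comb_mul (comb_const (-Complex.I))
        (comb_pow (comb_mul comb_id (comb_conj comb_id)) p)) comb_id)
      (by omega) (by omega) (by omega))
  have cnlc : Comb p (p+1) 0 (fun f x => (starRingEnd ℂ) (nlSub p f x)) := comb_conj cnl
  have mI : (fun f : SPfun => (Complex.ofReal (ItildeSS p k (h + 1) f.1) : ℂ)) ∈ spanJ p k := by
    have t1 : Comb (2*p+1) (2*p+1) (2*k-2) (fun f x =>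
        2 * pD (k - (h+1)) (nlSub p f) x * pD (k - (h+1)) f x * pD (2 * (h+1) - 2) f x
          * (cD 0 f x) ^ (p + 1) * f x ^ (p - 2)) :=
      comb_cast (comb_mul (comb_mul (comb_mul (comb_mul (comb_mul (comb_const 2)
        (comb_iter_pD cnl (k - (h+1)))) (comb_pD (k - (h+1)))) (comb_pD (2*(h+1)-2)))
        (comb_pow (comb_cD 0) (p+1))) (comb_pow comb_id (p-2)))
        (by omega) (by omega) (by omega)
    have t2 : Comb (2*p+1) (2*p+1) (2*k-2) (fun f x =>
        (pD (k - (h+1)) f x) ^ 2 * pD (2 * (h+1) - 2) (nlSub p f) x * (cD 0 f x) ^ (p + 1)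
          * f x ^ (p - 2)) :=
      comb_cast (comb_mul (comb_mul (comb_mul (comb_pow (comb_pD (k - (h+1))) 2)
        (comb_iter_pD cnl (2*(h+1)-2))) (comb_pow (comb_cD 0) (p+1)))
        (comb_pow comb_id (p-2)))
        (by omega) (by omega) (by omega)
    have t3 : Comb (2*p+1) (2*p+1) (2*k-2) (fun f x =>
        (pD (k - (h+1)) f x) ^ 2 * pD (2 * (h+1) - 2) f x
          * (((p : ℂ) + 1) * (cD 0 f x) ^ p * (starRingEnd ℂ) (nlSub p f x)) * f x ^ (p - 2)) :=
      comb_cast (comb_mul (comb_mul (comb_mul (comb_pow (comb_pD (k - (h+1))) 2)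
        (comb_pD (2*(h+1)-2))) (comb_mul (comb_mul (comb_const ((p:ℂ)+1))
        (comb_pow (comb_cD 0) p)) cnlc)) (comb_pow comb_id (p-2)))
        (by omega) (by omega) (by omega)
    have t4 : Comb (2*p+1) (2*p+1) (2*k-2) (fun f x =>
        (pD (k - (h+1)) f x) ^ 2 * pD (2 * (h+1) - 2) f x * (cD 0 f x) ^ (p + 1)
          * (((p : ℂ) - 2) * f x ^ (p - 3) * nlSub p f x)) := by
      rcases Nat.lt_or_ge p 3 with hp3 | hp3
      · have hp2 : p = 2 := by omega
        subst hp2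
        refine comb_congr (fun f hf x => ?_) comb_zero
        norm_num
      · exact comb_cast (comb_mul (comb_mul (comb_mul (comb_pow (comb_pD (k - (h+1))) 2)
          (comb_pD (2*(h+1)-2))) (comb_pow (comb_cD 0) (p+1)))
          (comb_mul (comb_mul (comb_const ((p:ℂ)-2)) (comb_pow comb_id (p-3))) cnl))
          (by omega) (by omega) (by omega)
    exact re_mem_span p k h1k (comb_add (comb_add (comb_add t1 t2) t3) t4)
  have mK : (fun f : SPfun => (Complex.ofReal (KtildeSS p k (h + 1) f.1) : ℂ)) ∈ spanJ p k := by
    have t1 : Comb (2*p+1) (2*p+1) (2*k-2) (fun f x =>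
        2 * pD (k - (h+1)) (nlSub p f) x * pD (k - (h+1)) f x * cD (2 * (h+1) - 2) f x
          * (cD 0 f x) ^ p * f x ^ (p - 1)) :=
      comb_cast (comb_mul (comb_mul (comb_mul (comb_mul (comb_mul (comb_const 2)
        (comb_iter_pD cnl (k - (h+1)))) (comb_pD (k - (h+1)))) (comb_cD (2*(h+1)-2)))
        (comb_pow (comb_cD 0) p)) (comb_pow comb_id (p-1)))
        (by omega) (by omega) (by omega)
    have t2 : Comb (2*p+1) (2*p+1) (2*k-2) (fun f x =>
        (pD (k - (h+1)) f x) ^ 2 * (starRingEnd ℂ) (pD (2 * (h+1) - 2) (nlSub p f) x)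
          * (cD 0 f x) ^ p * f x ^ (p - 1)) :=
      comb_cast (comb_mul (comb_mul (comb_mul (comb_pow (comb_pD (k - (h+1))) 2)
        (comb_conj (comb_iter_pD cnl (2*(h+1)-2)))) (comb_pow (comb_cD 0) p))
        (comb_pow comb_id (p-1)))
        (by omega) (by omega) (by omega)
    have t3 : Comb (2*p+1) (2*p+1) (2*k-2) (fun f x =>
        (pD (k - (h+1)) f x) ^ 2 * cD (2 * (h+1) - 2) f x
          * ((p : ℂ) * (cD 0 f x) ^ (p - 1) * (starRingEnd ℂ) (nlSub p f x)) * f x ^ (p - 1)) :=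
      comb_cast (comb_mul (comb_mul (comb_mul (comb_pow (comb_pD (k - (h+1))) 2)
        (comb_cD (2*(h+1)-2))) (comb_mul (comb_mul (comb_const ((p:ℂ)))
        (comb_pow (comb_cD 0) (p-1))) cnlc)) (comb_pow comb_id (p-1)))
        (by omega) (by omega) (by omega)
    have t4 : Comb (2*p+1) (2*p+1) (2*k-2) (fun f x =>
        (pD (k - (h+1)) f x) ^ 2 * cD (2 * (h+1) - 2) f x * (cD 0 f x) ^ p
          * (((p : ℂ) - 1) * f x ^ (p - 2) * nlSub p f x)) :=
      comb_cast (comb_mul (comb_mul (comb_mul (comb_pow (comb_pD (k - (h+1))) 2)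
        (comb_cD (2*(h+1)-2))) (comb_pow (comb_cD 0) p))
        (comb_mul (comb_mul (comb_const ((p:ℂ)-1)) (comb_pow comb_id (p-2))) cnl))
        (by omega) (by omega) (by omega)
    exact re_mem_span p k h1k (comb_add (comb_add (comb_add t1 t2) t3) t4)
  have mV : (fun f : SPfun => (Complex.ofReal (VtildeSS p k (h + 1) f.1) : ℂ)) ∈ spanJ p k := by
    have t1 : Comb (2*p+1) (2*p+1) (2*k-2) (fun f x =>
        pD (k - (h+1)) (nlSub p f) x * cD (k - (h+1)) f x * pD (2 * (h+1) - 2) f x * cD 0 f x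
          * (f x * cD 0 f x) ^ (p - 1)) :=
      comb_cast (comb_mul (comb_mul (comb_mul (comb_mul (comb_iter_pD cnl (k - (h+1)))
        (comb_cD (k - (h+1)))) (comb_pD (2*(h+1)-2))) (comb_cD 0))
        (comb_pow (comb_mul comb_id (comb_cD 0)) (p-1)))
        (by omega) (by omega) (by omega)
    have t2 : Comb (2*p+1) (2*p+1) (2*k-2) (fun f x =>
        pD (k - (h+1)) f x * (starRingEnd ℂ) (pD (k - (h+1)) (nlSub p f) x) * pD (2 * (h+1) - 2) f x
          * cD 0 f x * (f x * cD 0 f x) ^ (p - 1)) :=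
      comb_cast (comb_mul (comb_mul (comb_mul (comb_mul (comb_pD (k - (h+1)))
        (comb_conj (comb_iter_pD cnl (k - (h+1))))) (comb_pD (2*(h+1)-2))) (comb_cD 0))
        (comb_pow (comb_mul comb_id (comb_cD 0)) (p-1)))
        (by omega) (by omega) (by omega)
    have t3 : Comb (2*p+1) (2*p+1) (2*k-2) (fun f x =>
        pD (k - (h+1)) f x * cD (k - (h+1)) f x * pD (2 * (h+1) - 2) (nlSub p f) x * cD 0 f x
          * (f x * cD 0 f x) ^ (p - 1)) :=
      comb_cast (comb_mul (comb_mul (comb_mul (comb_mul (comb_pD (k - (h+1)))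
        (comb_cD (k - (h+1)))) (comb_iter_pD cnl (2*(h+1)-2))) (comb_cD 0))
        (comb_pow (comb_mul comb_id (comb_cD 0)) (p-1)))
        (by omega) (by omega) (by omega)
    have t4 : Comb (2*p+1) (2*p+1) (2*k-2) (fun f x =>
        pD (k - (h+1)) f x * cD (k - (h+1)) f x * pD (2 * (h+1) - 2) f x * (starRingEnd ℂ) (nlSub p f x)
          * (f x * cD 0 f x) ^ (p - 1)) :=
      comb_cast (comb_mul (comb_mul (comb_mul (comb_mul (comb_pD (k - (h+1)))
        (comb_cD (k - (h+1)))) (comb_pD (2*(h+1)-2))) cnlc)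
        (comb_pow (comb_mul comb_id (comb_cD 0)) (p-1)))
        (by omega) (by omega) (by omega)
    have inner : Comb (p+1) (p+1) 0 (fun f x =>
        nlSub p f x * cD 0 f x + f x * (starRingEnd ℂ) (nlSub p f x)) :=
      comb_add (comb_cast (comb_mul cnl (comb_cD 0)) (by omega) (by omega) (by omega))
        (comb_cast (comb_mul comb_id cnlc) (by omega) (by omega) (by omega))
    have t5 : Comb (2*p+1) (2*p+1) (2*k-2) (fun f x =>
        pD (k - (h+1)) f x * cD (k - (h+1)) f x * pD (2 * (h+1) - 2) f x * cD 0 f x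
          * (((p : ℂ) - 1) * (f x * cD 0 f x) ^ (p - 2)
              * (nlSub p f x * cD 0 f x + f x * (starRingEnd ℂ) (nlSub p f x)))) :=
      comb_cast (comb_mul (comb_mul (comb_mul (comb_mul (comb_pD (k - (h+1)))
        (comb_cD (k - (h+1)))) (comb_pD (2*(h+1)-2))) (comb_cD 0))
        (comb_mul (comb_mul (comb_const ((p:ℂ)-1))
          (comb_pow (comb_mul comb_id (comb_cD 0)) (p-2))) inner))
        (by omega) (by omega) (by omega)
    exact re_mem_span p k h1k (comb_add (comb_add (comb_add (comb_add t1 t2) t3) t4) t5)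
  have mW : (fun f : SPfun => (Complex.ofReal (WtildeSS p k (h + 1) f.1) : ℂ)) ∈ spanJ p k := by
    have t1 : Comb (2*p+1) (2*p+1) (2*k-2) (fun f x =>
        pD (k - (h+1)) (nlSub p f) x * cD (k - (h+1) - 1) f x * pD (2 * (h+1) - 1) f x
          * (cD 0 f x) ^ p * f x ^ (p - 1)) :=
      comb_cast (comb_mul (comb_mul (comb_mul (comb_mul (comb_iter_pD cnl (k - (h+1)))
        (comb_cD (k - (h+1) - 1))) (comb_pD (2*(h+1)-1))) (comb_pow (comb_cD 0) p))
        (comb_pow comb_id (p-1)))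
        (by omega) (by omega) (by omega)
    have t2 : Comb (2*p+1) (2*p+1) (2*k-2) (fun f x =>
        pD (k - (h+1)) f x * (starRingEnd ℂ) (pD (k - (h+1) - 1) (nlSub p f) x) * pD (2 * (h+1) - 1) f x
          * (cD 0 f x) ^ p * f x ^ (p - 1)) :=
      comb_cast (comb_mul (comb_mul (comb_mul (comb_mul (comb_pD (k - (h+1)))
        (comb_conj (comb_iter_pD cnl (k - (h+1) - 1)))) (comb_pD (2*(h+1)-1)))
        (comb_pow (comb_cD 0) p)) (comb_pow comb_id (p-1)))
        (by omega) (by omega) (by omega)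
    have t3 : Comb (2*p+1) (2*p+1) (2*k-2) (fun f x =>
        pD (k - (h+1)) f x * cD (k - (h+1) - 1) f x * pD (2 * (h+1) - 1) (nlSub p f) x
          * (cD 0 f x) ^ p * f x ^ (p - 1)) :=
      comb_cast (comb_mul (comb_mul (comb_mul (comb_mul (comb_pD (k - (h+1)))
        (comb_cD (k - (h+1) - 1))) (comb_iter_pD cnl (2*(h+1)-1))) (comb_pow (comb_cD 0) p))
        (comb_pow comb_id (p-1)))
        (by omega) (by omega) (by omega)
    have t4 : Comb (2*p+1) (2*p+1) (2*k-2) (fun f x =>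
        pD (k - (h+1)) f x * cD (k - (h+1) - 1) f x * pD (2 * (h+1) - 1) f x
          * ((p : ℂ) * (cD 0 f x) ^ (p - 1) * (starRingEnd ℂ) (nlSub p f x)) * f x ^ (p - 1)) :=
      comb_cast (comb_mul (comb_mul (comb_mul (comb_mul (comb_pD (k - (h+1)))
        (comb_cD (k - (h+1) - 1))) (comb_pD (2*(h+1)-1)))
        (comb_mul (comb_mul (comb_const ((p:ℂ))) (comb_pow (comb_cD 0) (p-1))) cnlc))
        (comb_pow comb_id (p-1)))
        (by omega) (by omega) (by omega)
    have t5 : Comb (2*p+1) (2*p+1) (2*k-2) (fun f x =>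
        pD (k - (h+1)) f x * cD (k - (h+1) - 1) f x * pD (2 * (h+1) - 1) f x * (cD 0 f x) ^ p
          * (((p : ℂ) - 1) * f x ^ (p - 2) * nlSub p f x)) :=
      comb_cast (comb_mul (comb_mul (comb_mul (comb_mul (comb_pD (k - (h+1)))
        (comb_cD (k - (h+1) - 1))) (comb_pD (2*(h+1)-1))) (comb_pow (comb_cD 0) p))
        (comb_mul (comb_mul (comb_const ((p:ℂ)-1)) (comb_pow comb_id (p-2))) cnl))
        (by omega) (by omega) (by omega)
    exact re_mem_span p k h1k (comb_add (comb_add (comb_add (comb_add t1 t2) t3) t4) t5)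
  refine ⟨?_, ?_, ?_, ?_⟩
  · show (fun f : SPfun => (Complex.ofReal (ItildeSS p k (h + 1) f.1) : ℂ)) - 0 ∈ spanJ p k
    rw [sub_zero]; exact mI
  · show (fun f : SPfun => (Complex.ofReal (KtildeSS p k (h + 1) f.1) : ℂ)) - 0 ∈ spanJ p k
    rw [sub_zero]; exact mK
  · show (fun f : SPfun => (Complex.ofReal (VtildeSS p k (h + 1) f.1) : ℂ)) - 0 ∈ spanJ p k
    rw [sub_zero]; exact mV
  · show (fun f : SPfun => (Complex.ofReal (WtildeSS p k (h + 1) f.1) : ℂ)) - 0 ∈ spanJ p k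
    rw [sub_zero]; exact mW
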